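/- In the variant of the swap-extended guest-message system in which the authentication-tag check is omitted (the swap-in transition may restore any saved snapshot, not only the one whose tag equals rmd), there exists a trace containing two encryption events with the same nonce but distinct payloads. (This is the rollback attack of the paper's sanity-check lemma ExeAttackSwapInRollbackBM for the model variant -DIGNORE_ROOT_MD_ENTRY.) -/
import Mathlib

/-- The two honest agents exchanging guest messages. -/
inductive Agent : Type
  | Guest
  | FW
deriving DecidableEq

/-- The phase of the guest: idle, or waiting for a firmware response. -/
inductive Phase : Type
  | Idle
  | Waiting
deriving DecidableEq

/-- Whether the guest is currently active or swapped out. -/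
inductive Mode : Type
  | Active
  | Swapped
deriving DecidableEq

/-- The core state of the guest-message counter system: the guest's message
counter, the firmware's message counter, and the phase. -/
structure Core : Type where
  gc : ℕ
  fc : ℕ
  ph : Phase

/-- A state of the swap-extended guest-message system: the core counter state,
the mode, the root-metadata entry `rmd` (an authentication tag), and the list of
saved snapshots `(tag, core state)` with pairwise distinct tags. -/
structure SwSt : Type where
  core : Core
  mode : Mode
  rmd : ℕ
  snaps : List (ℕ × Core)

/-- An encryption event: the logging agent, the nonce used, and the payload. -/
abbrev EncEvent (M : Type) : Type := Agent × ℕ × M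

/-- `ReachSwNC M st evs`: the swap-extended guest-message system in the variant
where the authentication-tag check is omitted (swap-in may restore *any* saved
snapshot, not only the one whose tag equals `rmd`) reaches state `st` from the
initial state having logged the encryption events `evs`, in order. -/
inductive ReachSwNC (M : Type) : SwSt → List (EncEvent M) → Prop
  | init : ReachSwNC M ⟨⟨0, 0, Phase.Idle⟩, Mode.Active, 0, []⟩ []
  | send {gc fc rmd : ℕ} {snaps : List (ℕ × Core)} {evs : List (EncEvent M)} (m : M) :
      ReachSwNC M ⟨⟨gc, fc, Phase.Idle⟩, Mode.Active, rmd, snaps⟩ evs →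
      ReachSwNC M ⟨⟨gc, fc, Phase.Waiting⟩, Mode.Active, rmd, snaps⟩
        (evs ++ [(Agent.Guest, gc, m)])
  | serve {gc fc rmd : ℕ} {snaps : List (ℕ × Core)} {evs : List (EncEvent M)} (m : M) :
      ReachSwNC M ⟨⟨gc, fc, Phase.Waiting⟩, Mode.Active, rmd, snaps⟩ evs → fc = gc →
      ReachSwNC M ⟨⟨gc, fc + 2, Phase.Waiting⟩, Mode.Active, rmd, snaps⟩
        (evs ++ [(Agent.FW, fc + 1, m)])
  | recv {gc fc rmd : ℕ} {snaps : List (ℕ × Core)} {evs : List (EncEvent M)} :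
      ReachSwNC M ⟨⟨gc, fc, Phase.Waiting⟩, Mode.Active, rmd, snaps⟩ evs → fc = gc + 2 →
      ReachSwNC M ⟨⟨gc + 2, fc, Phase.Idle⟩, Mode.Active, rmd, snaps⟩ evs
  | swapOut {c : Core} {rmd : ℕ} {snaps : List (ℕ × Core)} {evs : List (EncEvent M)}
      (t : ℕ) :
      ReachSwNC M ⟨c, Mode.Active, rmd, snaps⟩ evs →
      t ∉ snaps.map Prod.fst →
      ReachSwNC M ⟨c, Mode.Swapped, t, (t, c) :: snaps⟩ evs
  | swapIn {c : Core} {rmd : ℕ} {snaps : List (ℕ × Core)} {evs : List (EncEvent M)}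
      (t : ℕ) (s : Core) :
      ReachSwNC M ⟨c, Mode.Swapped, rmd, snaps⟩ evs →
      (t, s) ∈ snaps →
      ReachSwNC M ⟨s, Mode.Active, rmd, snaps⟩ evs

/-- ExeAttackSwapInRollbackBM (model variant -DIGNORE_ROOT_MD_ENTRY): if the
authentication-tag check is omitted, there is a rollback attack: some trace
contains two encryption events with the same nonce but distinct payloads. -/
theorem ExeAttackSwapInRollbackBM :
    ∃ (st : SwSt) (evs : List (EncEvent ℕ)) (a a' : Agent) (n m m' : ℕ),
      ReachSwNC ℕ st evs ∧ m ≠ m' ∧ List.Sublist [(a, n, m), (a', n, m')] evs := by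
  refine ⟨⟨⟨0, 0, Phase.Waiting⟩, Mode.Active, 6,
      [(6, ⟨0, 0, Phase.Waiting⟩), (5, ⟨0, 0, Phase.Idle⟩)]⟩,
    (([] ++ [(Agent.Guest, 0, 0)]) ++ [(Agent.Guest, 0, 1)]), Agent.Guest, Agent.Guest, 0, 0, 1, ?_, by decide, ?_⟩
  · exact ReachSwNC.send 1
      (ReachSwNC.swapIn 5 ⟨0, 0, Phase.Idle⟩
        (ReachSwNC.swapOut 6
          (ReachSwNC.send 0
            (ReachSwNC.swapIn 5 ⟨0, 0, Phase.Idle⟩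
              (ReachSwNC.swapOut 5 ReachSwNC.init (by simp))
              (by simp)))
          (by simp))
        (by simp))
  · simp
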